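/- For a δ-ISS control system Σ as above with the same quantization condition β(α⁻¹(ε),1) + γ(μ) + η ≤ α⁻¹(ε), the inverse relation R⁻¹ = {(x_q, x) : ‖x − x_q‖ ≤ α⁻¹(ε)} is an ε-InitSOP simulation relation from the symbolic model S_q(Σ) to S(Σ), so S_q(Σ) ⪯_I^ε S(Σ). -/
import Mathlib


open Metric Set Filter

section Defs

variable {X U Y Xa Ua Xb Ub : Type*}

/-- ε-approximate initial-state opacity preserving simulation relation from
system `a` to system `b`. -/
def InitSOPSim [MetricSpace Y] (Xa0 XaS : Set Xa) (tra : Xa → Ua → Xa → Prop)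
    (Ha : Xa → Y) (Xb0 XbS : Set Xb) (trb : Xb → Ub → Xb → Prop) (Hb : Xb → Y)
    (ε : ℝ) (R : Set (Xa × Xb)) : Prop :=
  (∀ xa0 ∈ Xa0 ∩ XaS, ∃ xb0 ∈ Xb0 ∩ XbS, (xa0, xb0) ∈ R) ∧
  (∀ xb0 ∈ Xb0 \ XbS, ∃ xa0 ∈ Xa0 \ XaS, (xa0, xb0) ∈ R) ∧
  (∀ p ∈ R, dist (Ha p.1) (Hb p.2) ≤ ε) ∧
  (∀ p ∈ R, ∀ (ua : Ua) (xa' : Xa), tra p.1 ua xa' →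
    ∃ (ub : Ub) (xb' : Xb), trb p.2 ub xb' ∧ (xa', xb') ∈ R) ∧
  (∀ p ∈ R, ∀ (ub : Ub) (xb' : Xb), trb p.2 ub xb' →
    ∃ (ua : Ua) (xa' : Xa), tra p.1 ua xa' ∧ (xa', xb') ∈ R)

/-- Class K function (continuous, strictly increasing on `[0,∞)`, zero at zero). -/
def ClassK (α : ℝ → ℝ) : Prop :=
  ContinuousOn α (Ici 0) ∧ StrictMonoOn α (Ici 0) ∧ α 0 = 0

/-- Class K∞ function. -/
def ClassKInf (α : ℝ → ℝ) : Prop :=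
  ClassK α ∧ Tendsto α atTop atTop

/-- Class KL function (with discrete time argument). -/
def ClassKLNat (β : ℝ → ℕ → ℝ) : Prop :=
  (∀ k : ℕ, ClassK (fun r => β r k)) ∧
  ∀ r : ℝ, 0 < r → Antitone (β r) ∧ Tendsto (β r) atTop (nhds 0)

/-- Solution map of the discrete-time control system `ξ(k+1) = f(ξ(k), υ(k))`. -/
def sol {E F : Type*} (f : E → F → E) (x : E) (υ : ℕ → F) : ℕ → E
  | 0 => x
  | k + 1 => f (sol f x υ k) (υ k)

/-- The η-grid approximation `[A]_η` of a set `A ⊆ ℝ^N` (with the sup norm). -/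
def gridApprox {N : ℕ} (η : ℝ) (A : Set (Fin N → ℝ)) : Set (Fin N → ℝ) :=
  {a ∈ A | ∀ i, ∃ k : ℤ, a i = k * η}

/-- `A` is a (nonempty) finite union of boxes, each of span at least `η`. -/
def UnionOfBoxesSpanGe {N : ℕ} (A : Set (Fin N → ℝ)) (η : ℝ) : Prop :=
  ∃ (M : ℕ) (c d : Fin M → Fin N → ℝ),
    (∀ j i, c j i < d j i) ∧ (∀ j i, η ≤ d j i - c j i) ∧
    A = ⋃ j, {x | ∀ i, x i ∈ Icc (c j i) (d j i)}

/-- Incremental input-to-state stability (δ-ISS) of `f` on `𝕏` with inputs in `𝕌`,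
witnessed by `β ∈ KL` and `γ ∈ K∞`; `c` plays the role of `‖υ - υ'‖_∞`. -/
def DeltaISS {N M : ℕ} (𝕏 : Set (Fin N → ℝ)) (𝕌 : Set (Fin M → ℝ))
    (f : (Fin N → ℝ) → (Fin M → ℝ) → Fin N → ℝ)
    (β : ℝ → ℕ → ℝ) (γ : ℝ → ℝ) : Prop :=
  ∀ x ∈ 𝕏, ∀ x' ∈ 𝕏, ∀ υ υ' : ℕ → Fin M → ℝ,
    (∀ j, υ j ∈ 𝕌) → (∀ j, υ' j ∈ 𝕌) →
    ∀ c : ℝ, 0 ≤ c → (∀ j, ‖υ j - υ' j‖ ≤ c) →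
    ∀ k : ℕ, ‖sol f x υ k - sol f x' υ' k‖ ≤ β ‖x - x'‖ k + γ c

end Defs

lemma exists_int_mul_near {η c d x : ℝ} (hη : 0 < η) (hcd : η ≤ d - c)
    (hx : x ∈ Set.Icc c d) : ∃ k : ℤ, (k : ℝ) * η ∈ Set.Icc c d ∧ |x - k * η| ≤ η := by
  obtain ⟨hxc, hxd⟩ := hx
  have h1 : (⌊x / η⌋ : ℝ) ≤ x / η := Int.floor_le _
  have h2 : x / η < ⌊x / η⌋ + 1 := Int.lt_floor_add_one _
  have h1' : (⌊x / η⌋ : ℝ) * η ≤ x := by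
    have := mul_le_mul_of_nonneg_right h1 hη.le
    rwa [div_mul_cancel₀ _ hη.ne'] at this
  have h2' : x < ((⌊x / η⌋ : ℝ) + 1) * η := by
    have := mul_lt_mul_of_pos_right h2 hη
    rwa [div_mul_cancel₀ _ hη.ne'] at this
  by_cases hc : c ≤ (⌊x / η⌋ : ℝ) * η
  · exact ⟨⌊x / η⌋, ⟨hc, le_trans h1' hxd⟩, by rw [abs_le]; constructor <;> nlinarith⟩
  · refine ⟨⌊x / η⌋ + 1, ⟨?_, ?_⟩, ?_⟩
    · push_cast; nlinarith
    · push_cast; nlinarith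
    · push_cast; rw [abs_le]; constructor <;> nlinarith

lemma grid_near {N : ℕ} {A : Set (Fin N → ℝ)} {η : ℝ} (hη : 0 < η)
    (hA : UnionOfBoxesSpanGe A η) {x : Fin N → ℝ} (hx : x ∈ A) :
    ∃ a ∈ gridApprox η A, ‖x - a‖ ≤ η := by
  obtain ⟨M, c, d, hcd, hspan, rfl⟩ := hA
  obtain ⟨B, ⟨j, rfl⟩, hxB⟩ := hx
  have key : ∀ i, ∃ k : ℤ, (k : ℝ) * η ∈ Set.Icc (c j i) (d j i) ∧ |x i - k * η| ≤ η :=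
    fun i => exists_int_mul_near hη (hspan j i) (hxB i)
  choose k hk1 hk2 using key
  refine ⟨fun i => (k i : ℝ) * η, ⟨Set.mem_iUnion.2 ⟨j, fun i => hk1 i⟩,
    fun i => ⟨k i, rfl⟩⟩, ?_⟩
  rw [pi_norm_le_iff_of_nonneg hη.le]
  intro i
  simpa [Real.norm_eq_abs] using hk2 i

lemma classK_nonneg {α : ℝ → ℝ} (hα : ClassK α) {t : ℝ} (ht : 0 ≤ t) : 0 ≤ α t := by
  have := hα.2.1.monotoneOn Set.self_mem_Ici ht ht
  rwa [hα.2.2] at this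

lemma classK_mono {α : ℝ → ℝ} (hα : ClassK α) {s t : ℝ} (hs : 0 ≤ s) (hst : s ≤ t) :
    α s ≤ α t :=
  hα.2.1.monotoneOn hs (le_trans hs hst) hst

lemma gridApprox_subset {N : ℕ} (η : ℝ) (A : Set (Fin N → ℝ)) : gridApprox η A ⊆ A :=
  fun _ ha => ha.1



/-- Theorem 6.5, second part: the inverse relation
`{(x_q, x) : ‖x − x_q‖ ≤ α⁻¹(ε)}` is an ε-InitSOP simulation relation from the
symbolic model `S_q(Σ)` to `S(Σ)`. -/
theorem control_initSOP_sim_symbolic_to_concrete {N M P : ℕ}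
    (𝕏 𝕊 : Set (Fin N → ℝ)) (𝕌 : Set (Fin M → ℝ))
    (f : (Fin N → ℝ) → (Fin M → ℝ) → Fin N → ℝ)
    (h : (Fin N → ℝ) → Fin P → ℝ)
    (hS𝕏 : 𝕊 ⊆ 𝕏) (hinv : ∀ x ∈ 𝕏, ∀ u ∈ 𝕌, f x u ∈ 𝕏)
    (α : ℝ → ℝ) (hα : ClassKInf α) (hLip : ∀ x y, ‖h x - h y‖ ≤ α ‖x - y‖)
    (β : ℝ → ℕ → ℝ) (γ : ℝ → ℝ) (hβ : ClassKLNat β) (hγ : ClassKInf γ)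
    (hISS : DeltaISS 𝕏 𝕌 f β γ)
    (ε η μ r : ℝ) (hε : 0 < ε) (hη : 0 < η) (hμ : 0 < μ)
    (hr : 0 ≤ r) (hrε : α r = ε)
    (hboxS : UnionOfBoxesSpanGe 𝕊 η) (hboxXS : UnionOfBoxesSpanGe (𝕏 \ 𝕊) η)
    (hboxU : UnionOfBoxesSpanGe 𝕌 μ)
    (hq : β r 1 + γ μ + η ≤ r) :
    InitSOPSim (gridApprox η 𝕏) (gridApprox η 𝕊)
      (fun xq uq xq' => xq ∈ gridApprox η 𝕏 ∧ uq ∈ gridApprox μ 𝕌 ∧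
        xq' ∈ gridApprox η 𝕏 ∧ ‖xq' - f xq uq‖ ≤ η) h
      𝕏 𝕊 (fun x u x' => x ∈ 𝕏 ∧ u ∈ 𝕌 ∧ x' = f x u) h
      ε {p | p.1 ∈ gridApprox η 𝕏 ∧ p.2 ∈ 𝕏 ∧ ‖p.2 - p.1‖ ≤ r} := by
  have hβr : 0 ≤ β r 1 := classK_nonneg (hβ.1 1) hr
  have hγμ : 0 ≤ γ μ := classK_nonneg hγ.1 hμ.le
  have hηr : η ≤ r := by linarith
  -- key step estimate
  have step : ∀ xq ∈ 𝕏, ∀ x ∈ 𝕏, ‖x - xq‖ ≤ r → ∀ u ∈ 𝕌, ∀ uq ∈ 𝕌,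
      ‖u - uq‖ ≤ μ → ‖f x u - f xq uq‖ ≤ β r 1 + γ μ := by
    intro xq hxq x hx hxxq u hu uq huq huuq
    have := hISS x hx xq hxq (fun _ => u) (fun _ => uq) (fun _ => hu) (fun _ => huq)
      μ hμ.le (fun _ => huuq) 1
    have hsol : sol f x (fun _ => u) 1 = f x u := rfl
    have hsol' : sol f xq (fun _ => uq) 1 = f xq uq := rfl
    rw [hsol, hsol'] at this
    have hmono : β ‖x - xq‖ 1 ≤ β r 1 := classK_mono (hβ.1 1) (norm_nonneg _) hxxq
    linarith
  refine ⟨?_, ?_, ?_, ?_, ?_⟩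
  · -- initial secret states
    rintro xq0 ⟨hX, hSg⟩
    refine ⟨xq0, ⟨hS𝕏 hSg.1, hSg.1⟩, hX, hS𝕏 hSg.1, by simp [hr]⟩
  · -- initial non-secret states
    rintro x0 ⟨hX0, hnS⟩
    obtain ⟨a, ha, hna⟩ := grid_near hη hboxXS (⟨hX0, hnS⟩ : x0 ∈ 𝕏 \ 𝕊)
    refine ⟨a, ⟨⟨ha.1.1, ha.2⟩, fun hc => ha.1.2 hc.1⟩,
      ⟨⟨ha.1.1, ha.2⟩, hX0, ?_⟩⟩
    exact le_trans hna hηr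
  · -- output closeness
    rintro ⟨xq, x⟩ ⟨hxq, hx, hxxq⟩
    have h1 : ‖h xq - h x‖ ≤ α ‖xq - x‖ := hLip _ _
    have h2 : α ‖xq - x‖ ≤ α r := by
      refine classK_mono hα.1 (norm_nonneg _) ?_
      rwa [norm_sub_rev]
    calc dist (h xq) (h x) = ‖h xq - h x‖ := dist_eq_norm _ _
      _ ≤ α r := le_trans h1 h2
      _ = ε := hrε
  · -- forward simulation
    rintro ⟨xq, x⟩ ⟨hxq, hx, hxxq⟩ uq xq' ⟨_, huq, hxq', hstep⟩
    refine ⟨uq, f x uq, ⟨hx, huq.1, rfl⟩, hxq', hinv x hx uq huq.1, ?_⟩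
    have h1 : ‖f x uq - f xq uq‖ ≤ β r 1 + γ 0 := by
      have := hISS x hx xq (hxq.1) (fun _ => uq) (fun _ => uq)
        (fun _ => huq.1) (fun _ => huq.1) 0 le_rfl (fun _ => by simp) 1
      have hsol : sol f x (fun _ => uq) 1 = f x uq := rfl
      have hsol' : sol f xq (fun _ => uq) 1 = f xq uq := rfl
      rw [hsol, hsol'] at this
      have hmono : β ‖x - xq‖ 1 ≤ β r 1 := classK_mono (hβ.1 1) (norm_nonneg _) hxxq
      linarith
    rw [hγ.1.2.2] at h1
    calc ‖f x uq - xq'‖ ≤ ‖f x uq - f xq uq‖ + ‖f xq uq - xq'‖ := by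
          have := norm_add_le (f x uq - f xq uq) (f xq uq - xq')
          simpa using this
      _ ≤ (β r 1 + 0) + η := by
          rw [norm_sub_rev (f xq uq)]
          exact add_le_add (by linarith) hstep
      _ ≤ r := by linarith
  · -- backward simulation
    rintro ⟨xq, x⟩ ⟨hxq, hx, hxxq⟩ u x' ⟨_, hu, rfl⟩
    obtain ⟨uq, huq, huuq⟩ := grid_near hμ hboxU hu
    have hfq : f xq uq ∈ 𝕏 := hinv xq hxq.1 uq huq.1
    have hstep : ‖f x u - f xq uq‖ ≤ β r 1 + γ μ :=
      step xq hxq.1 x hx hxxq u hu uq huq.1 huuq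
    -- find a grid point of 𝕏 near f xq uq, via 𝕊 or 𝕏 \ 𝕊
    have hgrid : ∃ a ∈ gridApprox η 𝕏, ‖f xq uq - a‖ ≤ η := by
      by_cases hs : f xq uq ∈ 𝕊
      · obtain ⟨a, ha, hna⟩ := grid_near hη hboxS hs
        exact ⟨a, ⟨hS𝕏 ha.1, ha.2⟩, hna⟩
      · obtain ⟨a, ha, hna⟩ := grid_near hη hboxXS ⟨hfq, hs⟩
        exact ⟨a, ⟨ha.1.1, ha.2⟩, hna⟩
    obtain ⟨xq', hxq', hnear⟩ := hgrid
    refine ⟨uq, xq', ⟨hxq, huq, hxq', by rwa [norm_sub_rev]⟩, hxq', hinv x hx u hu, ?_⟩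
    calc ‖f x u - xq'‖ ≤ ‖f x u - f xq uq‖ + ‖f xq uq - xq'‖ := by
          have := norm_add_le (f x u - f xq uq) (f xq uq - xq')
          simpa using this
      _ ≤ (β r 1 + γ μ) + η := add_le_add hstep hnear
      _ ≤ r := hq
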